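/- arXiv:1004.4915 — 3 statements merged into one kernel-verified Lean document; each statement's English description precedes it below -/
import Mathlib

section
/- For every positive integer k, the number of k-weak edges in an undirected graph on n vertices is at most k(n−1). -/
/-!
If the induced subgraph on `U` is `k`-connected, all of its edges have strong connectivity at
least `k`, since `U` lies in a `k`-strong component. Otherwise some cut `(S, U \ S)` of `U` has
fewer than `k` edges; every `k`-weak edge of `U` is then a `k`-weak edge of `S`, of `U \ S`, or
one of these at most `k - 1` cut edges. Induction on `|U|` gives at most
`k (|S| - 1) + k (|U \ S| - 1) + (k - 1) < k (|U| - 1)` weak edges.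
-/

namespace GraphSparsification

open scoped BigOperators

variable {V : Type*}

/-- An edge `e` crosses the cut `(S, Sᶜ)`. -/
def Crosses (S : Set V) (e : Sym2 V) : Prop :=
  ∃ u v, e = s(u, v) ∧ u ∈ S ∧ v ∉ S

/-- The value (number of edges) of the cut determined by `S` in the edge set `E`. -/
noncomputable def cutValue (E : Set (Sym2 V)) (S : Set V) : ℕ :=
  {e | e ∈ E ∧ Crosses S e}.ncard

/-- The graph with vertex set `U` and edge set `F` is `k`-connected:
every cut has value at least `k`. -/
def IsKConnected (U : Set V) (F : Set (Sym2 V)) (k : ℕ) : Prop :=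
  ∀ S : Set V, S ⊆ U → S.Nonempty → S ≠ U → k ≤ cutValue F S

/-- Edges of `E` with both endpoints in `U` (the vertex-induced subgraph). -/
def induced (E : Set (Sym2 V)) (U : Set V) : Set (Sym2 V) :=
  {e | e ∈ E ∧ ∀ x ∈ e, x ∈ U}

/-- `U` is a `k`-strong component of the graph with edge set `E`:
a maximal `k`-connected vertex-induced subgraph. -/
def IsStrongComponent (E : Set (Sym2 V)) (k : ℕ) (U : Set V) : Prop :=
  U.Nonempty ∧ IsKConnected U (induced E U) k ∧
    ∀ U' : Set V, U ⊆ U' → IsKConnected U' (induced E U') k → U' = U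

/-- Strong connectivity of an edge: the largest `k` such that some `k`-strong component
contains `e`. -/
noncomputable def strongConn (E : Set (Sym2 V)) (e : Sym2 V) : ℕ :=
  sSup {k | ∃ U : Set V, IsStrongComponent E k U ∧ e ∈ induced E U}

/-- Connectivity via edges of `F`. -/
def connRel (F : Set (Sym2 V)) : V → V → Prop :=
  Relation.ReflTransGen (fun a b => a ≠ b ∧ s(a, b) ∈ F)

/-- Number of connected components of the graph on `V` with edge set `F`. -/
noncomputable def numComponents (F : Set (Sym2 V)) : ℕ :=
  Nat.card (Quot (fun a b : V => a ≠ b ∧ s(a, b) ∈ F))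

/-- Weight of the cut determined by `S` in the weighted graph `(E', w)`. -/
noncomputable def cutWeight (E' : Set (Sym2 V)) (w : Sym2 V → ℝ) (S : Set V) : ℝ :=
  ∑ᶠ e ∈ {e | e ∈ E' ∧ Crosses S e}, w e

/-- The weighted graph `(E', w)` is an `ε`-sparsification of `E`: every weighted cut is
within a `(1 ± ε)` factor of the corresponding cut of `E`. -/
def IsSparsification (E E' : Set (Sym2 V)) (w : Sym2 V → ℝ) (ε : ℝ) : Prop :=
  ∀ S : Set V, S.Nonempty → S ≠ Set.univ →
    (1 - ε) * (cutValue E S : ℝ) ≤ cutWeight E' w S ∧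
      cutWeight E' w S ≤ (1 + ε) * (cutValue E S : ℝ)

/-- Probability weight of the outcome `σ` when each coin `a` comes up `true`
independently with probability `p a`. -/
noncomputable def bernWeight {α : Type*} [Fintype α] (p : α → ℝ) (σ : α → Bool) : ℝ :=
  ∏ a, if σ a then p a else 1 - p a

/-- Probability of the event `A` under independent coins with head-probabilities `p`. -/
noncomputable def Pr {α : Type*} [Fintype α] [DecidableEq α] (p : α → ℝ)
    (A : Set (α → Bool)) : ℝ :=
  ∑ σ : α → Bool, A.indicator (bernWeight p) σ

/-- Expectation of `f` under independent coins with head-probabilities `p`. -/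
noncomputable def Exp {α : Type*} [Fintype α] [DecidableEq α] (p : α → ℝ)
    (f : (α → Bool) → ℝ) : ℝ :=
  ∑ σ : α → Bool, bernWeight p σ * f σ

/-- Same-part relation of the partition `S_{l,k}` of refinement sampling after `k` rounds of
refinement at level `l` (the `Fin L` index `l` represents level `l+1`, and the `Fin K`
index `k` represents round `k+1`): `S_{l,0} = {V}`, and `S_{l,k+1}` splits each part of
`S_{l,k}` into the connected components spanned by edges whose `(l,k+1)`-coin is `true`
and whose endpoints lie in one part of `S_{l,k}`. -/
def sameS (E : Set (Sym2 V)) {L K : ℕ} (σ : Fin L × Fin K × Sym2 V → Bool) (l : Fin L) :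
    ℕ → V → V → Prop
  | 0 => fun _ _ => True
  | k + 1 => fun u v =>
      Relation.ReflTransGen (fun a b => a ≠ b ∧ s(a, b) ∈ E ∧ sameS E σ l k a b ∧
        ∃ hk : k < K, σ (l, ⟨k, hk⟩, s(a, b)) = true) u v

/-- `L(e)`: the minimum level `l ∈ {1, …, L}` such that the endpoints of `e` lie in
different parts of `S_{l,K}`. -/
noncomputable def levelOf (E : Set (Sym2 V)) {L K : ℕ} (σ : Fin L × Fin K × Sym2 V → Bool)
    (e : Sym2 V) : ℕ :=
  sInf {m | ∃ l : Fin L, m = (l : ℕ) + 1 ∧ ∀ u v : V, e = s(u, v) → ¬ sameS E σ l K u v}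

/-- Head-probabilities of the refinement-sampling coins: the coin of level `l` (represented
by the `Fin L` index `l - 1`) comes up `true` with probability `2^{-l}`. -/
noncomputable def pCoins {L K : ℕ} : Fin L × Fin K × Sym2 V → ℝ :=
  fun x => (1 / 2 : ℝ) ^ ((x.1 : ℕ) + 1)

/-- One step of Algorithm 3: process the arriving edge `e` with coins `coin` (indexed by
`J ∈ {1, …, LK}`), updating the partitions `D`, where `D 0` is the trivial partition `{V}`:
for `J = 1, 2, …` in order, the parts of `D J` containing the endpoints of `e` are merged
if the `J`-th coin of `e` is `true` and the endpoints of `e` lie in one part of the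
(already updated) partition number `J - 1`. -/
def processEdge (e : Sym2 V) (coin : ℕ → Bool) (D : ℕ → V → V → Prop) : ℕ → V → V → Prop
  | 0 => fun _ _ => True
  | J + 1 => fun u v =>
      Relation.EqvGen (fun a b => D (J + 1) a b ∨
        (coin (J + 1) = true ∧ s(a, b) = e ∧ processEdge e coin D J a b)) u v

/-- Initial state of the partitions of Algorithm 3: `D 0 = {V}` is the trivial partition and
all other partitions consist of singletons. -/
def initD : ℕ → V → V → Prop
  | 0 => fun _ _ => True
  | _ + 1 => Eq

/-- State of the partitions of Algorithm 3 after the first `t` edges of the stream `es`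
have been processed. -/
def DStream (coin : Sym2 V → ℕ → Bool) (es : ℕ → Sym2 V) : ℕ → ℕ → V → V → Prop
  | 0 => initD
  | t + 1 => processEdge (es t) (coin (es t)) (DStream coin es t)

/-- The endpoints of the edge `es t` lie in the same part of partition number `J` at the
moment `es t` arrives (i.e. while `es t` is being processed, partitions `0, …, J` having
already been updated). -/
def connectedAtArrival (coin : Sym2 V → ℕ → Bool) (es : ℕ → Sym2 V) (t J : ℕ) : Prop :=
  ∀ u v : V, es t = s(u, v) → processEdge (es t) (coin (es t)) (DStream coin es t) J u v

/-- The coins of Algorithm 3, reindexed by `J = K(l-1) + k`. -/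
def coinOf {L K : ℕ} (σ : Fin L × Fin K × Sym2 V → Bool) : Sym2 V → ℕ → Bool :=
  fun e J =>
    if h : 1 ≤ J ∧ (J - 1) / K < L ∧ (J - 1) % K < K then
      σ (⟨(J - 1) / K, h.2.1⟩, ⟨(J - 1) % K, h.2.2⟩, e)
    else false

/-- `L'(e_t)`: the minimum level `l ∈ {1, …, L}` such that the endpoints of the edge `es t`
lie in different parts of `D_{(l,K)}` (i.e. partition number `lK`) when `es t` is
processed. -/
noncomputable def streamLevel (coin : Sym2 V → ℕ → Bool) (es : ℕ → Sym2 V) (K L t : ℕ) : ℕ :=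
  sInf {l | 1 ≤ l ∧ l ≤ L ∧ ∀ u v : V, es t = s(u, v) → ¬ DStream coin es (t + 1) (l * K) u v}

section StrongComponents

variable [Finite V]

lemma cutValue_le_natCard_sym2 (F : Set (Sym2 V)) (S : Set V) :
    cutValue F S ≤ Nat.card (Sym2 V) := by
  rw [← Set.ncard_univ]
  exact Set.ncard_le_ncard (Set.subset_univ _)

lemma IsKConnected.le_natCard_sym2 {U : Set V} {F : Set (Sym2 V)} {k : ℕ}
    (hU : IsKConnected U F k) {e : Sym2 V} (he : ∀ x ∈ e, x ∈ U) (hdiag : ¬ e.IsDiag) :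
    k ≤ Nat.card (Sym2 V) := by
  induction e using Sym2.ind with
  | _ a b =>
  have hab : a ≠ b := fun h => hdiag (Sym2.mk_isDiag_iff.mpr h)
  have hb : b ∈ U := he b (Sym2.mem_mk_right a b)
  have hsingleton : ({a} : Set V) ≠ U := fun h => hab (h ▸ hb : b ∈ ({a} : Set V)).symm
  exact (hU {a} (Set.singleton_subset_iff.mpr (he a (Sym2.mem_mk_left a b)))
    (Set.singleton_nonempty a) hsingleton).trans (cutValue_le_natCard_sym2 _ _)

lemma exists_isStrongComponent_superset {E : Set (Sym2 V)} {k : ℕ} {U : Set V}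
    (hne : U.Nonempty) (hU : IsKConnected U (induced E U) k) :
    ∃ U', IsStrongComponent E k U' ∧ U ⊆ U' := by
  obtain ⟨U', hUU', hmax⟩ :=
    Finite.exists_le_maximal (p := fun W : Set V => IsKConnected W (induced E W) k) hU
  exact ⟨U', ⟨hne.mono hUU', hmax.prop, fun W hW hWconn => (hmax.eq_of_le hWconn hW).symm⟩,
    hUU'⟩

lemma le_strongConn_of_isKConnected {E : Set (Sym2 V)} (hE : ∀ e ∈ E, ¬ e.IsDiag) {k : ℕ}
    {U : Set V} (hU : IsKConnected U (induced E U) k) {e : Sym2 V} (he : e ∈ induced E U) :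
    k ≤ strongConn E e := by
  obtain ⟨U', hU', hUU'⟩ :=
    exists_isStrongComponent_superset ⟨e.out.1, he.2 _ (Sym2.out_fst_mem e)⟩ hU
  refine le_csSup ⟨Nat.card (Sym2 V), ?_⟩ ⟨U', hU', he.1, fun x hx => hUU' (he.2 x hx)⟩
  rintro m ⟨W, ⟨-, hW, -⟩, heW⟩
  exact hW.le_natCard_sym2 heW.2 (hE e heW.1)

end StrongComponents

lemma induced_subset_union_crosses (E : Set (Sym2 V)) (U S : Set V) :
    induced E U ⊆ induced E S ∪ induced E (U \ S) ∪ {e | e ∈ induced E U ∧ Crosses S e} := by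
  rintro e ⟨heE, heU⟩
  induction e using Sym2.ind with
  | _ a b =>
  have ha := heU a (Sym2.mem_mk_left a b)
  have hb := heU b (Sym2.mem_mk_right a b)
  by_cases haS : a ∈ S <;> by_cases hbS : b ∈ S
  · exact .inl (.inl ⟨heE, by simp [haS, hbS]⟩)
  · exact .inr ⟨⟨heE, heU⟩, a, b, rfl, haS, hbS⟩
  · exact .inr ⟨⟨heE, heU⟩, b, a, Sym2.eq_swap, hbS, haS⟩
  · exact .inl (.inr ⟨heE, by simp [ha, hb, haS, hbS]⟩)

lemma mul_pred_add_mul_pred_add_pred_le {k s t : ℕ} (hs : 0 < s) (ht : 0 < t) :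
    k * (s - 1) + k * (t - 1) + (k - 1) ≤ k * (s + t - 1) := by
  obtain ⟨s, rfl⟩ := Nat.exists_eq_add_of_le' hs
  obtain ⟨t, rfl⟩ := Nat.exists_eq_add_of_le' ht
  rw [show s + 1 + (t + 1) - 1 = s + t + 1 by omega, Nat.add_sub_cancel, Nat.add_sub_cancel,
    mul_add, mul_add, mul_one]
  omega

lemma ncard_induced_inter_weak_le [Finite V] {E : Set (Sym2 V)} (hE : ∀ e ∈ E, ¬ e.IsDiag)
    (k : ℕ) (U : Set V) :
    (induced E U ∩ {e | strongConn E e < k}).ncard ≤ k * (U.ncard - 1) := by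
  induction hn : U.ncard using Nat.strong_induction_on generalizing U with
  | _ n ih =>
  by_cases hU : IsKConnected U (induced E U) k
  · have hempty : induced E U ∩ {e | strongConn E e < k} = ∅ :=
      Set.eq_empty_of_forall_notMem fun e ⟨he, hweak⟩ =>
        (le_strongConn_of_isKConnected hE hU he).not_gt hweak
    simp [hempty]
  obtain ⟨S, hSU, hS, hSU_ne, hcut⟩ : ∃ S ⊆ U, S.Nonempty ∧ S ≠ U ∧
      cutValue (induced E U) S < k := by
    simpa [IsKConnected] using hU
  have hS_pos : 0 < S.ncard := (Set.ncard_pos).mpr hS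
  have hcompl_pos : 0 < (U \ S).ncard :=
    (Set.ncard_pos).mpr (Set.sdiff_nonempty.mpr fun h => hSU_ne (hSU.antisymm h))
  have hcard : (U \ S).ncard + S.ncard = n := hn ▸ Set.ncard_sdiff_add_ncard_of_subset hSU
  set W := {e | strongConn E e < k}
  calc (induced E U ∩ W).ncard
      ≤ (induced E S ∩ W ∪ induced E (U \ S) ∩ W ∪ {e | e ∈ induced E U ∧ Crosses S e}).ncard :=
        Set.ncard_le_ncard fun e ⟨he, hw⟩ => by
          rcases induced_subset_union_crosses E U S he with (hS | hS) | hcross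
          exacts [.inl (.inl ⟨hS, hw⟩), .inl (.inr ⟨hS, hw⟩), .inr hcross]
    _ ≤ (induced E S ∩ W).ncard + (induced E (U \ S) ∩ W).ncard + cutValue (induced E U) S :=
        (Set.ncard_union_le _ _).trans (Nat.add_le_add_right (Set.ncard_union_le _ _) _)
    _ ≤ k * (S.ncard - 1) + k * ((U \ S).ncard - 1) + (k - 1) := by
        gcongr
        exacts [ih _ (by omega) S rfl, ih _ (by omega) (U \ S) rfl, Nat.le_sub_one_of_lt hcut]
    _ ≤ k * (n - 1) := by
        rw [← hcard, add_comm (U \ S).ncard]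
        exact mul_pred_add_mul_pred_add_pred_le hS_pos hcompl_pos

theorem k_weak_edges_bound_general {V : Type*} [Fintype V] (E : Set (Sym2 V))
    (hE : ∀ e ∈ E, ¬ e.IsDiag) (k : ℕ) :
    {e | e ∈ E ∧ strongConn E e < k}.ncard ≤ k * (Fintype.card V - 1) := by
  have hinduced : induced E Set.univ = E := by ext e; simp [induced]
  have h := ncard_induced_inter_weak_le hE k (Set.univ : Set V)
  rwa [hinduced, Set.ncard_univ, Nat.card_eq_fintype_card] at h

/-- For every positive integer `k`, the number of `k`-weak edges (edges `e` with
strong connectivity `s_e < k`) in an undirected graph on `n` vertices is at most `k (n - 1)`. -/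
theorem k_weak_edges_bound {V : Type*} [Fintype V] (E : Set (Sym2 V))
    (hE : ∀ e ∈ E, ¬ e.IsDiag) (k : ℕ) (hk : 0 < k) :
    {e | e ∈ E ∧ strongConn E e < k}.ncard ≤ k * (Fintype.card V - 1) :=
  k_weak_edges_bound_general E hE k

end GraphSparsification
end

section
/- Let C be a k-connected graph on at most n vertices, let ρ = 16(d+2) ln n, and suppose each edge of C is included independently with probability p ≥ min{4ρ/k, 1}. Then with probability at least 1 − n^{−d}, every cut of the sampled graph (with each sampled edge given weight 1/p) has weight within a factor (1 ± 1/2) of the value of the corresponding cut of C; in particular the sampled graph is connected. -/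
namespace GraphSparsification

open scoped BigOperators

variable {V : Type*}

/-!
For a fixed cut of value `c`, the number of sampled crossing edges is a sum of `c` independent
Bernoulli(`p`) variables, so by a Chernoff bound it leaves `[pc/2, 3pc/2]` with probability at
most `2 exp(-pc/10)`. Karger's contraction argument, in a deterministic double-counting form,
shows that a graph with minimum cut `k` has at most `n^(4j)` cuts of value at most `jk`: if the
vertex set is partitioned into `t > 2j` classes, each class is a cut of value `≥ k`, so there
are `m ≥ tk/2` edges between classes, and a cut of value `≤ jk` survives the contraction of all
but `jk` of them. Grouping the cuts by `⌊c/k⌋`, the union bound gives failure probability at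
most `∑ⱼ n^(4(j+1)) · 2 exp(-pjk/10) ≤ n^(-d)` as soon as `pk ≥ 64 (d+2) ln n`; if instead
`p = 1` nothing is random. Finally, a sampled graph whose cuts all have positive weight is
connected.
-/

open Finset

section Bernoulli

variable {α : Type*} [Fintype α] {p : α → ℝ}

lemma bernWeight_nonneg (hp : ∀ a, p a ∈ Set.Icc (0 : ℝ) 1) (σ : α → Bool) :
    0 ≤ bernWeight p σ :=
  Finset.prod_nonneg fun a _ => by
    cases σ a <;> simp only [Bool.false_eq_true, if_true, if_false, sub_nonneg] <;>
      [exact (hp a).2; exact (hp a).1]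

variable [DecidableEq α]

lemma sum_prod_apply_bool (f : α → Bool → ℝ) :
    ∑ σ : α → Bool, ∏ a, f a (σ a) = ∏ a, (f a true + f a false) := by
  simp only [← Fintype.prod_sum f, Fintype.sum_bool]

lemma sum_bernWeight : ∑ σ : α → Bool, bernWeight p σ = 1 := by
  simp only [bernWeight, sum_prod_apply_bool fun a b => if b then p a else 1 - p a, if_true,
    Bool.false_eq_true, if_false, add_sub_cancel, Finset.prod_const_one]

lemma Pr_univ : Pr p Set.univ = 1 := by
  simp only [Pr, Set.indicator_univ, sum_bernWeight]

lemma Pr_compl (A : Set (α → Bool)) : Pr p Aᶜ = 1 - Pr p A := by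
  simp only [Pr, Set.indicator_compl, Pi.sub_apply, Finset.sum_sub_distrib, sum_bernWeight]

lemma bernWeight_le_Pr (hp : ∀ a, p a ∈ Set.Icc (0 : ℝ) 1) {A : Set (α → Bool)}
    {σ : α → Bool} (hσ : σ ∈ A) : bernWeight p σ ≤ Pr p A := by
  rw [← Set.indicator_of_mem hσ (bernWeight p)]
  exact single_le_sum (fun τ _ => Set.indicator_nonneg (fun τ _ => bernWeight_nonneg hp τ) τ)
    (mem_univ σ)

lemma Pr_mono (hp : ∀ a, p a ∈ Set.Icc (0 : ℝ) 1) {A B : Set (α → Bool)} (h : A ⊆ B) :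
    Pr p A ≤ Pr p B :=
  Finset.sum_le_sum fun σ _ =>
    Set.indicator_le_indicator_of_subset h (bernWeight_nonneg hp) σ

lemma Pr_union_le (hp : ∀ a, p a ∈ Set.Icc (0 : ℝ) 1) (A B : Set (α → Bool)) :
    Pr p (A ∪ B) ≤ Pr p A + Pr p B := by
  rw [Pr, Pr, Pr, ← Finset.sum_add_distrib]
  refine Finset.sum_le_sum fun σ _ => ?_
  have h0 := bernWeight_nonneg hp σ
  by_cases hA : σ ∈ A <;> by_cases hB : σ ∈ B <;> simp [Set.indicator, hA, hB, h0]

lemma Pr_biUnion_le (hp : ∀ a, p a ∈ Set.Icc (0 : ℝ) 1) {ι : Type*} (I : Finset ι)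
    (A : ι → Set (α → Bool)) : Pr p (⋃ i ∈ I, A i) ≤ ∑ i ∈ I, Pr p (A i) := by
  classical
  induction I using Finset.induction_on with
  | empty => simp [Pr]
  | insert i I hi ih =>
    rw [Finset.set_biUnion_insert, Finset.sum_insert hi]
    exact (Pr_union_le hp _ _).trans (add_le_add_right ih _)

lemma Pr_le_Exp (hp : ∀ a, p a ∈ Set.Icc (0 : ℝ) 1) {A : Set (α → Bool)}
    {f : (α → Bool) → ℝ} (hf0 : ∀ σ, 0 ≤ f σ) (hf1 : ∀ σ ∈ A, 1 ≤ f σ) :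
    Pr p A ≤ Exp p f := by
  refine Finset.sum_le_sum fun σ _ => ?_
  by_cases hσ : σ ∈ A
  · rw [Set.indicator_of_mem hσ]
    exact le_mul_of_one_le_right (bernWeight_nonneg hp σ) (hf1 σ hσ)
  · rw [Set.indicator_of_notMem hσ]
    exact mul_nonneg (bernWeight_nonneg hp σ) (hf0 σ)

lemma Exp_const_mul (c : ℝ) (f : (α → Bool) → ℝ) :
    Exp p (fun σ => c * f σ) = c * Exp p f := by
  simp only [Exp, Finset.mul_sum, mul_left_comm]

lemma Exp_prod (T : Finset α) (g : α → Bool → ℝ) :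
    Exp p (fun σ => ∏ a ∈ T, g a (σ a))
      = ∏ a ∈ T, (p a * g a true + (1 - p a) * g a false) := by
  have hsplit : ∀ σ : α → Bool, bernWeight p σ * ∏ a ∈ T, g a (σ a)
      = ∏ a, (if σ a then p a else 1 - p a) * (if a ∈ T then g a (σ a) else 1) := fun σ => by
    rw [Finset.prod_mul_distrib, Finset.prod_ite_mem, Finset.univ_inter, bernWeight]
  simp only [Exp, hsplit, sum_prod_apply_bool fun a b =>
    (if b then p a else 1 - p a) * (if a ∈ T then g a b else 1), if_true, Bool.false_eq_true,
    if_false]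
  rw [← Finset.prod_subset (Finset.subset_univ T) fun a _ ha => by simp [ha]]
  refine Finset.prod_congr rfl fun a ha => ?_
  simp [ha]

end Bernoulli

section Chernoff

variable {α : Type*}

lemma exp_mul_card_filter (T : Finset α) (σ : α → Bool) (t : ℝ) :
    Real.exp (t * #{a ∈ T | σ a}) = ∏ a ∈ T, if σ a then Real.exp t else 1 := by
  rw [prod_ite, prod_const, prod_const_one, mul_one, mul_comm, Real.exp_nat_mul]

variable [Fintype α] [DecidableEq α] {p : α → ℝ}

lemma chernoff_bound (hp : ∀ a, p a ∈ Set.Icc (0 : ℝ) 1) (T : Finset α) (t c : ℝ) :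
    Pr p {σ | c ≤ t * #{a ∈ T | σ a}}
      ≤ Real.exp (-c + (Real.exp t - 1) * ∑ a ∈ T, p a) := by
  have hmarkov : Pr p {σ | c ≤ t * #{a ∈ T | σ a}}
      ≤ Exp p (fun σ => Real.exp (-c) * ∏ a ∈ T, if σ a then Real.exp t else 1) := by
    refine Pr_le_Exp hp (fun σ => by positivity) fun σ hσ => ?_
    rw [← exp_mul_card_filter, ← Real.exp_add, Real.one_le_exp_iff]
    linarith [show c ≤ _ from hσ]
  have hmgf : ∏ a ∈ T, (p a * Real.exp t + (1 - p a) * 1)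
      ≤ Real.exp ((Real.exp t - 1) * ∑ a ∈ T, p a) := by
    rw [mul_sum, Real.exp_sum]
    refine prod_le_prod (fun a _ => ?_) fun a _ => ?_
    · nlinarith [(hp a).1, (hp a).2, Real.exp_pos t]
    · linarith [Real.add_one_le_exp ((Real.exp t - 1) * p a)]
  rw [Exp_const_mul, Exp_prod T fun _ b => if b then Real.exp t else 1] at hmarkov
  calc Pr p {σ | c ≤ t * #{a ∈ T | σ a}}
      ≤ Real.exp (-c) * ∏ a ∈ T, (p a * Real.exp t + (1 - p a) * 1) := by
        simpa only [if_true, if_false, Bool.false_eq_true] using hmarkov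
    _ ≤ Real.exp (-c) * Real.exp ((Real.exp t - 1) * ∑ a ∈ T, p a) :=
        mul_le_mul_of_nonneg_left hmgf (Real.exp_pos _).le
    _ = _ := (Real.exp_add _ _).symm

lemma exp_two_fifths_le : Real.exp (2 / 5) ≤ 3 / 2 := by
  have he2 : Real.exp (2 / 5) ^ 5 = Real.exp 1 ^ 2 := by
    rw [← Real.exp_nat_mul, ← Real.exp_nat_mul]; norm_num
  have h1 := Real.exp_one_lt_d9
  refine le_of_pow_le_pow_left₀ (n := 5) (by norm_num) (by norm_num) ?_
  rw [he2]
  nlinarith [Real.exp_pos 1]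

lemma exp_neg_two_fifths_le : Real.exp (-(2 / 5)) ≤ 7 / 10 := by
  rw [Real.exp_neg, inv_le_comm₀ (Real.exp_pos _) (by norm_num)]
  linarith [Real.quadratic_le_exp_of_nonneg (x := 2 / 5) (by norm_num)]

lemma chernoff_upper_tail (hp : ∀ a, p a ∈ Set.Icc (0 : ℝ) 1) (T : Finset α) :
    Pr p {σ | 3 / 2 * ∑ a ∈ T, p a < #{a ∈ T | σ a}}
      ≤ Real.exp (-(∑ a ∈ T, p a) / 10) := by
  have hμ : 0 ≤ ∑ a ∈ T, p a := sum_nonneg fun a _ => (hp a).1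
  calc Pr p {σ | 3 / 2 * ∑ a ∈ T, p a < #{a ∈ T | σ a}}
      ≤ Pr p {σ | 3 / 5 * ∑ a ∈ T, p a ≤ 2 / 5 * #{a ∈ T | σ a}} :=
        Pr_mono hp fun σ hσ => by simp only [Set.mem_ofPred_eq] at hσ ⊢; linarith
    _ ≤ _ := chernoff_bound hp T _ _
    _ ≤ _ := Real.exp_le_exp.mpr (by nlinarith [exp_two_fifths_le])

lemma chernoff_lower_tail (hp : ∀ a, p a ∈ Set.Icc (0 : ℝ) 1) (T : Finset α) :
    Pr p {σ | (#{a ∈ T | σ a} : ℝ) < (∑ a ∈ T, p a) / 2}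
      ≤ Real.exp (-(∑ a ∈ T, p a) / 10) := by
  have hμ : 0 ≤ ∑ a ∈ T, p a := sum_nonneg fun a _ => (hp a).1
  calc Pr p {σ | (#{a ∈ T | σ a} : ℝ) < (∑ a ∈ T, p a) / 2}
      ≤ Pr p {σ | -(1 / 5 * ∑ a ∈ T, p a) ≤ -(2 / 5) * #{a ∈ T | σ a}} :=
        Pr_mono hp fun σ hσ => by simp only [Set.mem_ofPred_eq] at hσ ⊢; linarith
    _ ≤ _ := chernoff_bound hp T _ _
    _ ≤ _ := Real.exp_le_exp.mpr (by nlinarith [exp_neg_two_fifths_le])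

end Chernoff

section CutCounting

variable {W : Type*}

def IsSaturated (r : Setoid W) (S : Set W) : Prop :=
  ∀ ⦃a b : W⦄, r a b → (a ∈ S ↔ b ∈ S)

def contract (r : Setoid W) (e : Sym2 W) : Setoid W :=
  Relation.EqvGen.setoid fun x y => r x y ∨ (x ∈ e ∧ y ∈ e)

lemma isSaturated_contract {r : Setoid W} {S : Set W} {e : Sym2 W} (hS : IsSaturated r S)
    (he : ¬ Crosses S e) : IsSaturated (contract r e) S := by
  have hle : contract r e ≤ Setoid.ker (· ∈ S) := by
    refine Setoid.eqvGen_le fun x y hxy => Setoid.ker_def.mpr (propext ?_)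
    rcases hxy with hxy | ⟨hx, hy⟩
    · exact hS hxy
    · induction e using Sym2.ind with
      | _ u v =>
        have huv : u ∈ S ↔ v ∈ S :=
          ⟨fun hu => by_contra fun hv => he ⟨u, v, rfl, hu, hv⟩,
            fun hv => by_contra fun hu => he ⟨v, u, Sym2.eq_swap, hv, hu⟩⟩
        rcases Sym2.mem_iff.mp hx with rfl | rfl <;> rcases Sym2.mem_iff.mp hy with rfl | rfl <;>
          tauto
  exact fun a b hab => (Setoid.ker_def.mp (hle hab)).to_iff

lemma isSaturated_bot (S : Set W) : IsSaturated ⊥ S := by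
  intro a b hab
  rw [Setoid.bot_def] at hab
  rw [hab]

variable [Fintype W]

open Classical in
noncomputable def smallCuts (F : Set (Sym2 W)) (r : Setoid W) (B : ℕ) : Finset (Set W) :=
  {S | IsSaturated r S ∧ S.Nonempty ∧ S ≠ Set.univ ∧ cutValue F S ≤ B}

open Classical in
noncomputable def interEdges (F : Set (Sym2 W)) (r : Setoid W) : Finset (Sym2 W) :=
  {e | e ∈ F ∧ ∃ a b, e = s(a, b) ∧ ¬ r a b}

lemma mem_smallCuts {F : Set (Sym2 W)} {r : Setoid W} {B : ℕ} {S : Set W} :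
    S ∈ smallCuts F r B ↔
      IsSaturated r S ∧ S.Nonempty ∧ S ≠ Set.univ ∧ cutValue F S ≤ B := by
  simp [smallCuts]

lemma mem_interEdges {F : Set (Sym2 W)} {r : Setoid W} {e : Sym2 W} :
    e ∈ interEdges F r ↔ e ∈ F ∧ ∃ a b, e = s(a, b) ∧ ¬ r a b := by
  simp [interEdges]

lemma card_smallCuts_le_two_pow (F : Set (Sym2 W)) (r : Setoid W) (B : ℕ) :
    #(smallCuts F r B) ≤ 2 ^ Nat.card (Quotient r) := by
  classical
  have hinj : Set.InjOn (fun S : Set W => Quotient.mk r '' S) (smallCuts F r B) := by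
    intro S hS S' hS' (h : Quotient.mk r '' S = Quotient.mk r '' S')
    have hsat := (mem_smallCuts.mp hS).1
    have hsat' := (mem_smallCuts.mp hS').1
    ext a
    constructor <;> intro ha
    · obtain ⟨b, hb, hba⟩ : ⟦a⟧ ∈ Quotient.mk r '' S' := h ▸ Set.mem_image_of_mem _ ha
      exact (hsat' (Quotient.exact hba)).mp hb
    · obtain ⟨b, hb, hba⟩ : ⟦a⟧ ∈ Quotient.mk r '' S := h ▸ Set.mem_image_of_mem _ ha
      exact (hsat (Quotient.exact hba)).mp hb
  calc #(smallCuts F r B) ≤ #(univ : Finset (Set (Quotient r))) :=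
        card_le_card_of_injOn _ (fun _ _ => mem_coe.mpr (mem_univ _)) hinj
    _ = 2 ^ Nat.card (Quotient r) := by
        rw [card_univ, Fintype.card_set, Nat.card_eq_fintype_card]

open Classical in
lemma cutValue_eq_card_interEdges_filter {F : Set (Sym2 W)} {r : Setoid W} {S : Set W}
    (hS : IsSaturated r S) : cutValue F S = #{e ∈ interEdges F r | Crosses S e} := by
  rw [cutValue, ← Set.ncard_coe_finset]
  congr 1
  ext e
  simp only [coe_filter, mem_interEdges, Set.mem_ofPred_eq]
  constructor
  · rintro ⟨heF, u, v, rfl, hu, hv⟩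
    exact ⟨⟨heF, u, v, rfl, fun huv => hv ((hS huv).mp hu)⟩, u, v, rfl, hu, hv⟩
  · rintro ⟨⟨heF, -⟩, hcross⟩
    exact ⟨heF, hcross⟩

lemma card_quotient_contract_lt {r : Setoid W} {a b : W} (hab : ¬ r a b) :
    Nat.card (Quotient (contract r s(a, b))) < Nat.card (Quotient r) := by
  classical
  have hle : r ≤ contract r s(a, b) := fun x y h => Relation.EqvGen.rel x y (Or.inl h)
  rw [Nat.card_eq_fintype_card, Nat.card_eq_fintype_card]
  refine Fintype.card_lt_of_surjective_not_injective (Setoid.map_of_le hle)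
    (fun q => q.inductionOn fun x => ⟨⟦x⟧, rfl⟩) fun hinj => hab (Quotient.exact (hinj ?_))
  exact Quotient.sound
    (Relation.EqvGen.rel a b (Or.inr ⟨Sym2.mem_mk_left a b, Sym2.mem_mk_right a b⟩))

lemma card_quotient_mul_le_two_mul_card_interEdges {F : Set (Sym2 W)} {r : Setoid W} {k : ℕ}
    (hconn : ∀ S : Set W, S.Nonempty → S ≠ Set.univ → k ≤ cutValue F S)
    (hr : 2 ≤ Nat.card (Quotient r)) : Nat.card (Quotient r) * k ≤ 2 * #(interEdges F r) := by
  classical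
  let cls : Quotient r → Set W := fun q => Quotient.mk r ⁻¹' {q}
  have hcut : ∀ q ∈ (univ : Finset (Quotient r)),
      k ≤ #(bipartiteAbove (fun q e => Crosses (cls q) e) (interEdges F r) q) := by
    intro q _
    have hsat : IsSaturated r (cls q) := fun a b hab => by
      simp only [cls, Set.mem_preimage, Set.mem_singleton_iff, Quotient.sound hab]
    obtain ⟨q', hq'⟩ := Fintype.exists_ne_of_one_lt_card
      (by rwa [← Nat.card_eq_fintype_card]) q
    refine (cutValue_eq_card_interEdges_filter hsat).symm ▸ hconn _ ?_ ?_
    · exact q.exists_rep.imp fun a ha => ha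
    · intro huniv
      have hmem : q'.out ∈ cls q := huniv ▸ Set.mem_univ _
      exact hq' (q'.out_eq.symm.trans hmem)
  have hends : ∀ e ∈ interEdges F r,
      #(bipartiteBelow (fun q e => Crosses (cls q) e) univ e) ≤ 2 := by
    intro e he
    obtain ⟨-, a, b, rfl, -⟩ := mem_interEdges.mp he
    refine (card_le_card (t := {⟦a⟧, ⟦b⟧}) fun q hq => ?_).trans card_le_two
    obtain ⟨u, v, huv, (hu : ⟦u⟧ = q), -⟩ := (mem_filter.mp hq).2
    rcases Sym2.eq_iff.mp huv with ⟨rfl, -⟩ | ⟨-, rfl⟩ <;> simp [← hu]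
  have := card_mul_le_card_mul _ hcut hends
  rwa [card_univ, ← Nat.card_eq_fintype_card, mul_comm _ 2] at this

open Classical in
lemma card_interEdges_sub_le {F : Set (Sym2 W)} {r : Setoid W} {B : ℕ} {S : Set W}
    (hS : S ∈ smallCuts F r B) :
    #(interEdges F r) - B ≤ #{e ∈ interEdges F r | ¬ Crosses S e} := by
  obtain ⟨hsat, -, -, hB⟩ := mem_smallCuts.mp hS
  rw [cutValue_eq_card_interEdges_filter hsat] at hB
  have := card_filter_add_card_filter_not (s := interEdges F r) (p := fun e => Crosses S e)
  omega

open Classical in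
lemma card_filter_not_crosses_le (F : Set (Sym2 W)) (r : Setoid W) (B : ℕ) (e : Sym2 W) :
    #{S ∈ smallCuts F r B | ¬ Crosses S e} ≤ #(smallCuts F (contract r e) B) := by
  refine card_le_card fun S hS => ?_
  obtain ⟨hS, hnc⟩ := mem_filter.mp hS
  obtain ⟨hsat, hne, huniv, hB⟩ := mem_smallCuts.mp hS
  exact mem_smallCuts.mpr ⟨isSaturated_contract hsat hnc, hne, huniv, hB⟩

-- `N` small cuts, `t` classes, `m` inter-class edges: each cut survives the contraction of at
-- least `m - jk` of the edges, each contraction keeps at most `X` cuts, and `tk ≤ 2m`.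
lemma le_of_contraction_average {N m t j k X Y : ℕ} (hk : 0 < k) (ht : 2 * j < t)
    (hdeg : t * k ≤ 2 * m) (hdc : N * (m - j * k) ≤ m * X) (hpascal : X * t = Y * (t - 2 * j)) :
    N ≤ Y := by
  obtain ⟨t', rfl⟩ : ∃ t', t = 2 * j + t' + 1 := ⟨t - 2 * j - 1, by omega⟩
  have hjk : j * k < m := by nlinarith
  obtain ⟨m', rfl⟩ : ∃ m', m = j * k + m' := ⟨m - j * k, by omega⟩
  rw [Nat.add_sub_cancel_left] at hdc
  rw [show 2 * j + t' + 1 - 2 * j = t' + 1 by omega] at hpascal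
  refine le_of_mul_le_mul_right (a := (t' + 1) * (j * k + m')) ?_
    (Nat.mul_pos (by omega) (by omega))
  calc N * ((t' + 1) * (j * k + m')) ≤ N * ((2 * j + t' + 1) * m') :=
        Nat.mul_le_mul_left N (by nlinarith)
    _ = (2 * j + t' + 1) * (N * m') := by ring
    _ ≤ (2 * j + t' + 1) * ((j * k + m') * X) := Nat.mul_le_mul_left _ hdc
    _ = (j * k + m') * (X * (2 * j + t' + 1)) := by ring
    _ = Y * ((t' + 1) * (j * k + m')) := by rw [hpascal]; ring

theorem card_smallCuts_le {F : Set (Sym2 W)} {k : ℕ} (hk : 0 < k)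
    (hconn : ∀ S : Set W, S.Nonempty → S ≠ Set.univ → k ≤ cutValue F S) {j : ℕ}
    (hj : 0 < j) (r : Setoid W) :
    #(smallCuts F r (j * k))
      ≤ 2 ^ (2 * j) * (max (Nat.card (Quotient r)) (2 * j)).choose (2 * j) := by
  induction hcard : Nat.card (Quotient r) using Nat.strong_induction_on generalizing r with
  | _ t ih =>
  rcases le_or_gt t (2 * j) with ht | ht
  · rw [max_eq_right ht, Nat.choose_self, mul_one]
    exact (card_smallCuts_le_two_pow F r _).trans (hcard ▸ Nat.pow_le_pow_right two_pos ht)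
  classical
  have hcol : ∀ e ∈ interEdges F r,
      #(bipartiteBelow (fun S e => ¬ Crosses S e) (smallCuts F r (j * k)) e)
        ≤ 2 ^ (2 * j) * (t - 1).choose (2 * j) := by
    intro e he
    obtain ⟨-, a, b, rfl, hab⟩ := mem_interEdges.mp he
    have hlt : Nat.card (Quotient (contract r s(a, b))) < t :=
      hcard ▸ card_quotient_contract_lt hab
    refine (card_filter_not_crosses_le F r _ _).trans ((ih _ hlt _ rfl).trans ?_)
    exact Nat.mul_le_mul_left _ (Nat.choose_le_choose _ (max_le (by omega) (by omega)))
  have hdc := card_mul_le_card_mul _ (fun S hS => card_interEdges_sub_le hS) hcol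
  have hdeg := hcard ▸ card_quotient_mul_le_two_mul_card_interEdges (F := F) hconn (by omega)
  have hpascal := Nat.choose_mul_succ_eq (t - 1) (2 * j)
  rw [Nat.sub_add_cancel (by omega : 1 ≤ t)] at hpascal
  rw [max_eq_left ht.le]
  exact le_of_contraction_average hk ht hdeg hdc (by rw [mul_assoc, hpascal]; ring)

end CutCounting

section CutSums

variable {W : Type*} [Fintype W]

open Classical in
variable (W) in
noncomputable def cuts : Finset (Set W) :=
  {S | S.Nonempty ∧ S ≠ Set.univ}

lemma mem_cuts {S : Set W} : S ∈ cuts W ↔ S.Nonempty ∧ S ≠ Set.univ := by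
  simp [cuts]

lemma card_smallCuts_bot_le_pow {F : Set (Sym2 W)} {k n : ℕ} (hk : 0 < k)
    (hconn : ∀ S : Set W, S.Nonempty → S ≠ Set.univ → k ≤ cutValue F S)
    (hn : Fintype.card W ≤ n) (h2 : 2 ≤ n) {j : ℕ} (hj : 0 < j) :
    #(smallCuts F ⊥ (j * k)) ≤ n ^ (4 * j) := by
  refine (card_smallCuts_le hk hconn hj ⊥).trans ?_
  rw [Nat.card_congr Setoid.quotientBotEquiv, Nat.card_eq_fintype_card]
  rcases le_total (Fintype.card W) (2 * j) with hW | hW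
  · rw [max_eq_right hW, Nat.choose_self, mul_one]
    exact (Nat.pow_le_pow_left h2 _).trans (Nat.pow_le_pow_right (by omega) (by omega))
  · rw [max_eq_left hW]
    calc 2 ^ (2 * j) * (Fintype.card W).choose (2 * j) ≤ n ^ (2 * j) * n ^ (2 * j) :=
          Nat.mul_le_mul (Nat.pow_le_pow_left h2 _)
            ((Nat.choose_le_pow _ _).trans (Nat.pow_le_pow_left hn _))
      _ = n ^ (4 * j) := by rw [← pow_add]; ring_nf

lemma pow_mul_exp_le {n j : ℕ} {d c : ℝ} (h2 : 2 ≤ n) (hj : 1 ≤ j) (hd : 0 ≤ d)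
    (hc : 32 / 5 * (d + 2) * Real.log n ≤ c) :
    (n : ℝ) ^ (4 * (j + 1)) * (2 * Real.exp (-(j * c)))
      ≤ (n : ℝ) ^ (-d) * (1 / 2) ^ j / 2 := by
  have hn : (0 : ℝ) < n := by positivity
  have hlog2 : Real.log 2 ≤ Real.log n := Real.log_le_log two_pos (by exact_mod_cast h2)
  have hlog2_pos := Real.log_pos one_lt_two
  have hj' : (1 : ℝ) ≤ j := by exact_mod_cast hj
  have hexp2 : (2 : ℝ) = Real.exp (Real.log 2) := (Real.exp_log two_pos).symm
  have hlhs : (n : ℝ) ^ (4 * (j + 1)) * (2 * Real.exp (-(j * c)))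
      = Real.exp ((4 * (j + 1) : ℕ) * Real.log n + Real.log 2 - j * c) := by
    rw [Real.exp_sub, Real.exp_add, Real.exp_nat_mul, Real.exp_log hn, ← hexp2, Real.exp_neg]
    ring
  have hrhs : (n : ℝ) ^ (-d) * (1 / 2) ^ j / 2
      = Real.exp (Real.log n * -d - j * Real.log 2 - Real.log 2) := by
    rw [Real.exp_sub, Real.exp_sub, Real.exp_nat_mul, ← hexp2,
      Real.rpow_def_of_pos hn, one_div, inv_pow]
    ring
  rw [hlhs, hrhs, Real.exp_le_exp]
  push_cast
  nlinarith [mul_le_mul_of_nonneg_left hc (by linarith : (0 : ℝ) ≤ j),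
    mul_nonneg hd hlog2_pos.le,
    mul_nonneg (mul_nonneg hd (sub_nonneg.mpr hj')) (hlog2_pos.le.trans hlog2)]

lemma card_cuts_filter_div_eq_le {F : Set (Sym2 W)} {k n : ℕ} (hk : 0 < k)
    (hconn : ∀ S : Set W, S.Nonempty → S ≠ Set.univ → k ≤ cutValue F S)
    (hn : Fintype.card W ≤ n) (h2 : 2 ≤ n) (j : ℕ) :
    #{S ∈ cuts W | cutValue F S / k = j} ≤ n ^ (4 * (j + 1)) := by
  refine (card_le_card fun S hS => ?_).trans (card_smallCuts_bot_le_pow hk hconn hn h2 j.succ_pos)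
  obtain ⟨hcut, rfl⟩ := mem_filter.mp hS
  obtain ⟨hne, huniv⟩ := mem_cuts.mp hcut
  exact mem_smallCuts.mpr ⟨isSaturated_bot S, hne, huniv,
    ((Nat.div_lt_iff_lt_mul hk).mp (Nat.lt_succ_self _)).le⟩

lemma sum_exp_neg_cutValue_filter_div_eq_le {F : Set (Sym2 W)} {k n : ℕ} {c : ℝ} (hk : 0 < k)
    (hconn : ∀ S : Set W, S.Nonempty → S ≠ Set.univ → k ≤ cutValue F S)
    (hn : Fintype.card W ≤ n) (h2 : 2 ≤ n) (hc : 0 ≤ c) (j : ℕ) :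
    ∑ S ∈ cuts W with cutValue F S / k = j, 2 * Real.exp (-(c * cutValue F S))
      ≤ (n : ℝ) ^ (4 * (j + 1)) * (2 * Real.exp (-(j * (c * k)))) := by
  refine (sum_le_card_nsmul _ _ (2 * Real.exp (-(j * (c * k)))) fun S hS => ?_).trans ?_
  · obtain ⟨-, rfl⟩ := mem_filter.mp hS
    have : ((cutValue F S / k : ℕ) : ℝ) * k ≤ cutValue F S := by
      exact_mod_cast Nat.div_mul_le_self _ _
    exact mul_le_mul_of_nonneg_left (Real.exp_le_exp.mpr (by nlinarith)) zero_le_two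
  · rw [nsmul_eq_mul]
    gcongr
    exact_mod_cast card_cuts_filter_div_eq_le hk hconn hn h2 j

lemma sum_exp_neg_cutValue_le {F : Set (Sym2 W)} {k n : ℕ} {d c : ℝ} (hk : 0 < k)
    (hconn : ∀ S : Set W, S.Nonempty → S ≠ Set.univ → k ≤ cutValue F S)
    (hn : Fintype.card W ≤ n) (hd : 0 ≤ d) (hc : 32 / 5 * (d + 2) * Real.log n ≤ c * k) :
    ∑ S ∈ cuts W, 2 * Real.exp (-(c * cutValue F S)) ≤ (n : ℝ) ^ (-d) := by
  rcases (cuts W).eq_empty_or_nonempty with hempty | ⟨S₀, hS₀⟩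
  · rw [hempty, sum_empty]
    positivity
  have h2 : 2 ≤ n := by
    obtain ⟨⟨a, ha⟩, hS₀⟩ := mem_cuts.mp hS₀
    obtain ⟨b, hb⟩ := (Set.ne_univ_iff_exists_notMem S₀).mp hS₀
    exact (Fintype.one_lt_card_iff.mpr ⟨a, b, fun hab => hb (hab ▸ ha)⟩).trans_le hn
  have hc0 : 0 ≤ c := by
    refine nonneg_of_mul_nonneg_left (le_trans ?_ hc) (by exact_mod_cast hk)
    have := Real.log_natCast_nonneg n
    positivity
  set bands := (cuts W).image (cutValue F · / k)
  rw [← sum_fiberwise_of_maps_to (t := bands) fun S hS => mem_image_of_mem _ hS]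
  calc ∑ j ∈ bands, ∑ S ∈ cuts W with cutValue F S / k = j,
        2 * Real.exp (-(c * cutValue F S))
      ≤ ∑ j ∈ bands, (n : ℝ) ^ (-d) * (1 / 2) ^ j / 2 := by
        refine sum_le_sum fun j hj =>
          (sum_exp_neg_cutValue_filter_div_eq_le hk hconn hn h2 hc0 j).trans
            (pow_mul_exp_le h2 ?_ hd hc)
        obtain ⟨S, hS, rfl⟩ := mem_image.mp hj
        obtain ⟨hne, huniv⟩ := mem_cuts.mp hS
        exact (Nat.one_le_div_iff hk).mpr (hconn S hne huniv)
    _ = (n : ℝ) ^ (-d) / 2 * ∑ j ∈ bands, (1 / 2 : ℝ) ^ j := by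
        rw [mul_sum]
        exact sum_congr rfl fun j _ => by ring
    _ ≤ (n : ℝ) ^ (-d) / 2 * 2 := by
        gcongr
        exact (summable_geometric_two.sum_le_tsum _ fun _ _ => by positivity).trans
          tsum_geometric_two.le
    _ = (n : ℝ) ^ (-d) := by ring

end CutSums

section Sampling

lemma isSparsification_of_subsingleton [Subsingleton V] (E E' : Set (Sym2 V)) (w : Sym2 V → ℝ)
    (ε : ℝ) : IsSparsification E E' w ε :=
  fun _ ⟨a, ha⟩ hS => absurd (Set.eq_univ_of_forall fun x => Subsingleton.elim a x ▸ ha) hS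

lemma connRel_of_isSparsification {E E' : Set (Sym2 V)} {w : Sym2 V → ℝ} {ε : ℝ}
    (h : IsSparsification E E' w ε) (hε : ε < 1)
    (hE : ∀ S : Set V, S.Nonempty → S ≠ Set.univ → 0 < cutValue E S) (u v : V) :
    connRel E' u v := by
  by_contra huv
  set S := {x | connRel E' u x}
  have hu : S.Nonempty := ⟨u, Relation.ReflTransGen.refl⟩
  have hS : S ≠ Set.univ := fun h => huv (h ▸ Set.mem_univ v : v ∈ S)
  obtain ⟨e, he, a, b, rfl, ha, hb⟩ : {e | e ∈ E' ∧ Crosses S e}.Nonempty := by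
    by_contra hempty
    have hw := (h S hu hS).1
    rw [cutWeight, Set.not_nonempty_iff_eq_empty.mp hempty, finsum_mem_empty] at hw
    have hc : (0 : ℝ) < cutValue E S := by exact_mod_cast hE S hu hS
    nlinarith
  exact hb (Relation.ReflTransGen.tail ha ⟨fun hab => hb (hab ▸ ha), he⟩)

variable {W : Type*} [Fintype W]

noncomputable def crossingEdges (F : Set (Sym2 W)) (S : Set W) : Finset (Sym2 W) :=
  (Set.toFinite {e | e ∈ F ∧ Crosses S e}).toFinset

lemma card_crossingEdges (F : Set (Sym2 W)) (S : Set W) : #(crossingEdges F S) = cutValue F S :=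
  (Set.ncard_eq_toFinset_card _ _).symm

lemma cutWeight_sample (F : Set (Sym2 W)) (σ : Sym2 W → Bool) (S : Set W) (c : ℝ) :
    cutWeight {e | e ∈ F ∧ σ e = true} (fun _ => c) S
      = #{e ∈ crossingEdges F S | σ e} * c := by
  have hset : {e | e ∈ {e | e ∈ F ∧ σ e = true} ∧ Crosses S e}
      = ↑({e ∈ crossingEdges F S | σ e} : Finset (Sym2 W)) := by
    ext e
    simp only [crossingEdges, coe_filter, Set.Finite.mem_toFinset, Set.mem_ofPred_eq]
    tauto
  rw [cutWeight, hset, finsum_mem_coe_finset, sum_const, nsmul_eq_mul]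

lemma isSparsification_sample {F : Set (Sym2 W)} {p ε : ℝ} (hp : 0 < p) {σ : Sym2 W → Bool}
    (h : ∀ S : Set W, S.Nonempty → S ≠ Set.univ →
      (1 - ε) * (p * cutValue F S) ≤ #{e ∈ crossingEdges F S | σ e} ∧
        (#{e ∈ crossingEdges F S | σ e} : ℝ) ≤ (1 + ε) * (p * cutValue F S)) :
    IsSparsification F {e | e ∈ F ∧ σ e = true} (fun _ => 1 / p) ε := by
  intro S hne huniv
  obtain ⟨hlo, hhi⟩ := h S hne huniv
  rw [cutWeight_sample, mul_one_div, le_div_iff₀ hp, div_le_iff₀ hp]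
  constructor <;> linarith

variable [DecidableEq W]

def cutDeviates (F : Set (Sym2 W)) (p : ℝ) (S : Set W) : Set (Sym2 W → Bool) :=
  {σ | (#{e ∈ crossingEdges F S | σ e} : ℝ) < p * cutValue F S / 2} ∪
    {σ | 3 / 2 * (p * cutValue F S) < #{e ∈ crossingEdges F S | σ e}}

lemma Pr_cutDeviates_le {p : ℝ} (hp : p ∈ Set.Icc (0 : ℝ) 1) (F : Set (Sym2 W)) (S : Set W) :
    Pr (fun _ => p) (cutDeviates F p S) ≤ 2 * Real.exp (-(p / 10 * cutValue F S)) := by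
  have hmean : ∑ _e ∈ crossingEdges F S, p = p * cutValue F S := by
    rw [sum_const, card_crossingEdges, nsmul_eq_mul, mul_comm]
  have hlower := chernoff_lower_tail (fun _ => hp) (crossingEdges F S)
  have hupper := chernoff_upper_tail (fun _ => hp) (crossingEdges F S)
  rw [hmean] at hlower hupper
  calc Pr (fun _ => p) (cutDeviates F p S)
      ≤ Real.exp (-(p * cutValue F S) / 10) + Real.exp (-(p * cutValue F S) / 10) :=
        (Pr_union_le (fun _ => hp) _ _).trans (add_le_add hlower hupper)
    _ = 2 * Real.exp (-(p / 10 * cutValue F S)) := by ring_nf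

lemma one_sub_rpow_le_Pr_isSparsification {F : Set (Sym2 W)} {k n : ℕ} {d p : ℝ} (hk : 0 < k)
    (hconn : ∀ S : Set W, S.Nonempty → S ≠ Set.univ → k ≤ cutValue F S)
    (hn : Fintype.card W ≤ n) (hd : 0 ≤ d) (hp0 : 0 < p) (hp1 : p ≤ 1)
    (hpk : 64 * (d + 2) * Real.log n ≤ p * k) :
    1 - (n : ℝ) ^ (-d) ≤
      Pr (fun _ => p)
        {σ | IsSparsification F {e | e ∈ F ∧ σ e = true} (fun _ => 1 / p) (1 / 2)} := by
  have hp : ∀ _ : Sym2 W, p ∈ Set.Icc (0 : ℝ) 1 := fun _ => ⟨hp0.le, hp1⟩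
  have hgood : (⋃ S ∈ cuts W, cutDeviates F p S)ᶜ ⊆
      {σ | IsSparsification F {e | e ∈ F ∧ σ e = true} (fun _ => 1 / p) (1 / 2)} := by
    intro σ hσ
    refine isSparsification_sample hp0 fun S hne huniv => ?_
    have hS : σ ∉ cutDeviates F p S := fun h =>
      hσ (Set.mem_biUnion (mem_coe.mpr (mem_cuts.mpr ⟨hne, huniv⟩)) h)
    simp only [cutDeviates, Set.mem_union, Set.mem_ofPred_eq, not_or, not_lt] at hS
    constructor <;> linarith [hS.1, hS.2]
  have hsum := sum_exp_neg_cutValue_le (F := F) (c := p / 10) hk hconn hn hd (by linarith)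
  calc 1 - (n : ℝ) ^ (-d) ≤ 1 - ∑ S ∈ cuts W, Pr (fun _ => p) (cutDeviates F p S) := by
        linarith [sum_le_sum fun S (_ : S ∈ cuts W) => Pr_cutDeviates_le ⟨hp0.le, hp1⟩ F S]
    _ ≤ 1 - Pr (fun _ => p) (⋃ S ∈ cuts W, cutDeviates F p S) := by
        linarith [Pr_biUnion_le hp (cuts W) (cutDeviates F p)]
    _ = Pr (fun _ => p) (⋃ S ∈ cuts W, cutDeviates F p S)ᶜ := (Pr_compl _).symm
    _ ≤ _ := Pr_mono hp hgood

lemma Pr_isSparsification_one (F : Set (Sym2 W)) :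
    1 ≤ Pr (fun _ => 1)
      {σ | IsSparsification F {e | e ∈ F ∧ σ e = true} (fun _ => 1 / 1) (1 / 2)} := by
  have hall :
      IsSparsification F {e | e ∈ F ∧ (fun _ => true) e = true} (fun _ => 1 / 1) (1 / 2) := by
    intro S _ _
    rw [cutWeight_sample, filter_true_of_mem fun _ _ => rfl, card_crossingEdges]
    constructor <;> linarith [(Nat.cast_nonneg (cutValue F S) : (0 : ℝ) ≤ _)]
  calc (1 : ℝ) = bernWeight (fun _ => 1) fun _ : Sym2 W => true := by simp [bernWeight]
    _ ≤ _ := bernWeight_le_Pr (fun _ => ⟨zero_le_one, le_rfl⟩) hall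

end Sampling

theorem sampling_k_connected_general {W : Type*} [Fintype W] [DecidableEq W] (F : Set (Sym2 W))
    (k : ℕ) (hk : 0 < k)
    (hconn : IsKConnected Set.univ F k) (n : ℕ) (hn : Fintype.card W ≤ n)
    (d p : ℝ) (hd : 0 < d) (hp1 : p ≤ 1)
    (hp : min (4 * (16 * (d + 2) * Real.log n) / (k : ℝ)) 1 ≤ p) :
    1 - (n : ℝ) ^ (-d) ≤
      Pr (fun _ : Sym2 W => p)
        {σ | IsSparsification F {e | e ∈ F ∧ σ e = true} (fun _ => 1 / p) (1 / 2) ∧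
          ∀ u v : W, connRel {e | e ∈ F ∧ σ e = true} u v} := by
  have hcuts : ∀ S : Set W, S.Nonempty → S ≠ Set.univ → k ≤ cutValue F S :=
    fun S hne huniv => hconn S (Set.subset_univ S) hne huniv
  have hlog := Real.log_natCast_nonneg n
  have hp0 : 0 ≤ p := le_trans (le_min (by positivity) zero_le_one) hp
  have hrpow : 0 ≤ (n : ℝ) ^ (-d) := Real.rpow_nonneg n.cast_nonneg _
  calc 1 - (n : ℝ) ^ (-d)
      ≤ Pr (fun _ => p)
          {σ | IsSparsification F {e | e ∈ F ∧ σ e = true} (fun _ => 1 / p) (1 / 2)} := ?_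
    _ ≤ _ := by
        refine Pr_mono (fun _ => ⟨hp0, hp1⟩) fun σ hσ => ⟨hσ, ?_⟩
        exact connRel_of_isSparsification hσ (by norm_num) fun S hne huniv =>
          hk.trans_le (hcuts S hne huniv)
  rcases le_or_gt (Fintype.card W) 1 with hW | hW
  · have := Fintype.card_le_one_iff_subsingleton.mp hW
    simp only [isSparsification_of_subsingleton, Set.ofPred_true, Pr_univ]
    linarith
  rcases min_le_iff.mp hp with hpk | hp_ge_one
  · have hk' : (0 : ℝ) < k := by exact_mod_cast hk
    have hlog_pos : 0 < Real.log n := Real.log_pos (by exact_mod_cast hW.trans_le hn)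
    rw [div_le_iff₀ hk'] at hpk
    exact one_sub_rpow_le_Pr_isSparsification hk hcuts hn hd.le
      (pos_of_mul_pos_left (by nlinarith) hk'.le) hp1 (by linarith)
  · obtain rfl : p = 1 := le_antisymm hp1 hp_ge_one
    linarith [Pr_isSparsification_one F]

/-- Let `C` be a `k`-connected graph on at most `n` vertices, let
`ρ = 16(d+2) ln n`, and suppose each edge of `C` is included independently with probability
`p ≥ min {4ρ/k, 1}`. Then with probability at least `1 - n^{-d}`, every cut of the sampled
graph (with each sampled edge given weight `1/p`) has weight within a factor `(1 ± 1/2)` of the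
value of the corresponding cut of `C`; in particular the sampled graph is connected. -/
theorem sampling_k_connected {W : Type*} [Fintype W] [DecidableEq W] (F : Set (Sym2 W))
    (hF : ∀ e ∈ F, ¬ e.IsDiag) (k : ℕ) (hk : 0 < k)
    (hconn : IsKConnected Set.univ F k) (n : ℕ) (hn : Fintype.card W ≤ n)
    (d p : ℝ) (hd : 0 < d) (hp1 : p ≤ 1)
    (hp : min (4 * (16 * (d + 2) * Real.log n) / (k : ℝ)) 1 ≤ p) :
    1 - (n : ℝ) ^ (-d) ≤
      Pr (fun _ : Sym2 W => p)
        {σ | IsSparsification F {e | e ∈ F ∧ σ e = true} (fun _ => 1 / p) (1 / 2) ∧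
          ∀ u v : W, connRel {e | e ∈ F ∧ σ e = true} u v} :=
  sampling_k_connected_general F k hk hconn n hn d p hd hp1 hp

end GraphSparsification
end

section
/- Every finite undirected graph C admits a partition of its vertex set into disjoint sets A and B with A ∪ B = V(C) and |A| ≥ |V(C)|/2, such that every vertex v ∈ A has at least as many edges to vertices in B as to vertices in A (i.e., at least half of v's edges within C go to B). -/
namespace GraphSparsification

open scoped BigOperators

variable {V : Type*}

/-!
Take a maximum cut `(S, Sᶜ)`. Moving a vertex `v` from `S` to `Sᶜ` changes the cut by the number
of neighbours of `v` in `S` minus the number in `Sᶜ`, so by maximality every vertex has at least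
as many neighbours across the cut as on its own side. The cut is symmetric in `S` and `Sᶜ`, so the
larger side can serve as `A`.
-/

section MaxCut

open Finset

variable {V M : Type*} [Fintype V] [DecidableEq V]

def crossingWeight [AddCommMonoid M] (w : V → V → M) (S : Finset V) : M :=
  ∑ x ∈ S, ∑ y ∈ Sᶜ, w x y

theorem crossingWeight_compl [AddCommMonoid M] {w : V → V → M} (hw : ∀ x y, w x y = w y x)
    (S : Finset V) : crossingWeight w Sᶜ = crossingWeight w S := by
  rw [crossingWeight, compl_compl, sum_comm]
  exact sum_congr rfl fun y _ => sum_congr rfl fun x _ => hw x y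

theorem crossingWeight_erase_add [AddCommMonoid M] {w : V → V → M} (hw0 : ∀ x, w x x = 0)
    {S : Finset V} {v : V} (hv : v ∈ S) :
    crossingWeight w (S.erase v) + ∑ y ∈ Sᶜ, w v y = crossingWeight w S + ∑ x ∈ S, w x v := by
  have hvS : v ∉ Sᶜ := notMem_compl.2 hv
  calc crossingWeight w (S.erase v) + ∑ y ∈ Sᶜ, w v y
      = ∑ x ∈ S.erase v, w x v + (∑ x ∈ S.erase v, ∑ y ∈ Sᶜ, w x y + ∑ y ∈ Sᶜ, w v y) := by
        simp only [crossingWeight, compl_erase, sum_insert hvS, sum_add_distrib, add_assoc]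
    _ = crossingWeight w S + ∑ x ∈ S, w x v := by
        rw [sum_erase_add _ _ hv, sum_erase (f := (w · v)) _ (hw0 v), add_comm]
        rfl

theorem sum_le_sum_compl_of_forall_crossingWeight_le [AddCommMonoid M] [LinearOrder M]
    [IsOrderedCancelAddMonoid M] {w : V → V → M} (hw : ∀ x y, w x y = w y x)
    (hw0 : ∀ x, w x x = 0) {S : Finset V} (hS : ∀ T, crossingWeight w T ≤ crossingWeight w S)
    {v : V} (hv : v ∈ S) : ∑ u ∈ S, w u v ≤ ∑ u ∈ Sᶜ, w u v := by
  have key := crossingWeight_erase_add hw0 (w := w) hv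
  simp only [hw v] at key
  refine le_of_add_le_add_left (a := crossingWeight w S) ?_
  calc crossingWeight w S + ∑ u ∈ S, w u v
      = crossingWeight w (S.erase v) + ∑ u ∈ Sᶜ, w u v := key.symm
    _ ≤ crossingWeight w S + ∑ u ∈ Sᶜ, w u v := by gcongr; exact hS _

theorem exists_two_mul_card_ge_and_sum_le_sum_compl [AddCommMonoid M] [LinearOrder M]
    [IsOrderedCancelAddMonoid M] {w : V → V → M} (hw : ∀ x y, w x y = w y x)
    (hw0 : ∀ x, w x x = 0) :
    ∃ A : Finset V, Fintype.card V ≤ 2 * #A ∧ ∀ v ∈ A, ∑ u ∈ A, w u v ≤ ∑ u ∈ Aᶜ, w u v := by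
  obtain ⟨S, hS⟩ := Finite.exists_max (crossingWeight w)
  have hSc : ∀ T, crossingWeight w T ≤ crossingWeight w Sᶜ := by
    simpa only [crossingWeight_compl hw] using hS
  have hcard := card_add_card_compl S
  by_cases hbig : Fintype.card V ≤ 2 * #S
  · exact ⟨S, hbig, fun v => sum_le_sum_compl_of_forall_crossingWeight_le hw hw0 hS⟩
  · refine ⟨Sᶜ, by omega, fun v hv => ?_⟩
    simpa only [compl_compl] using sum_le_sum_compl_of_forall_crossingWeight_le hw hw0 hSc hv

end MaxCut

/-- Every finite undirected graph `C` admits a partition of its vertex set into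
disjoint sets `A` and `B` with `A ∪ B = V(C)` and `|A| ≥ |V(C)|/2`, such that every vertex
`v ∈ A` has at least as many edges to vertices in `B` as to vertices in `A`. -/
theorem exists_half_partition {V : Type*} [Fintype V] (E : Set (Sym2 V))
    (hE : ∀ e ∈ E, ¬ e.IsDiag) :
    ∃ A B : Set V, A ∪ B = Set.univ ∧ Disjoint A B ∧
      Fintype.card V ≤ 2 * A.ncard ∧
      ∀ v ∈ A, {u | u ∈ A ∧ s(u, v) ∈ E}.ncard ≤ {u | u ∈ B ∧ s(u, v) ∈ E}.ncard := by
  classical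
  obtain ⟨A, hcard, hA⟩ := exists_two_mul_card_ge_and_sum_le_sum_compl
    (w := fun x y => if s(x, y) ∈ E then 1 else 0) (by simp [Sym2.eq_swap])
    (fun x => if_neg fun h => hE _ h (Sym2.mk_isDiag_iff.2 rfl))
  refine ⟨A, ↑Aᶜ, by simp, by simpa using disjoint_compl_right, by rwa [Set.ncard_coe_finset],
    fun v hv => ?_⟩
  have hdeg (T : Finset V) :
      {u | u ∈ (T : Set V) ∧ s(u, v) ∈ E}.ncard = ∑ u ∈ T, if s(u, v) ∈ E then 1 else 0 := by
    rw [← Finset.card_filter, ← Set.ncard_coe_finset, Finset.coe_filter]; rfl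
  rw [hdeg, hdeg]
  exact hA v hv

end GraphSparsification
end
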